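/- Let n ≥ 1 and m ≥ 1 be integers. Then for every a > 0 and every x ∈ ℝⁿ, the polyharmonic heat kernel satisfies the polyharmonic heat equation in the variable a: the derivative of a ↦ E_{m,a}(x) at a equals −((−Δ)^m E_{m,a})(x), i.e., ∂_a E_{m,a}(x) + (−1)^m (Δ^[m] E_{m,a})(x) = 0. -/

import Mathlib

open MeasureTheory Real Complex

noncomputable def heatKernel (n m : ℕ) (a : ℝ) (x : EuclideanSpace ℝ (Fin n)) : ℂ :=
  ((2 * Real.pi) ^ n : ℝ)⁻¹ •
    ∫ s : EuclideanSpace ℝ (Fin n),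
      Complex.exp (Complex.I * ((inner ℝ x s : ℝ) : ℂ) - (a : ℂ) * ((‖s‖ : ℝ) : ℂ) ^ (2 * m))

noncomputable def euclLaplacian {n : ℕ} {F : Type*} [NormedAddCommGroup F] [NormedSpace ℝ F]
    (f : EuclideanSpace ℝ (Fin n) → F) : EuclideanSpace ℝ (Fin n) → F :=
  fun x => ∑ i : Fin n,
    fderiv ℝ (fun y => fderiv ℝ f y (EuclideanSpace.single i 1)) x (EuclideanSpace.single i 1)

/-!
The heat kernel is the oscillatory integral `(2π)⁻ⁿ ∫ exp(i⟪x, s⟫) exp(-a‖s‖^(2m)) ds`. Its weight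
`exp(-a‖s‖^(2m))` has finite moments of all orders, which licenses differentiating under the
integral sign, in `x` as well as in `a`. Each `∂/∂xⱼ` multiplies the weight by `i sⱼ`, so `Δ`
multiplies it by `-‖s‖²` and `Δ^[m]` by `(-‖s‖²)^m`, whereas `∂/∂a` multiplies it by
`-‖s‖^(2m) = -(-1)^m (-‖s‖²)^m`.
-/

open scoped InnerProductSpace

noncomputable def expNegMulNormPow {E : Type*} [Norm E] (a : ℝ) (p : ℕ) (s : E) : ℂ :=
  rexp (-(a * ‖s‖ ^ p))

@[fun_prop]
theorem continuous_expNegMulNormPow {E : Type*} [SeminormedAddGroup E] (a : ℝ) (p : ℕ) :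
    Continuous (expNegMulNormPow (E := E) a p) := by
  unfold expNegMulNormPow; fun_prop

theorem hasDerivAt_expNegMulNormPow {E : Type*} [Norm E] {p : ℕ} (b : ℝ) (s : E) :
    HasDerivAt (fun b => expNegMulNormPow b p s) (-(‖s‖ : ℂ) ^ p * expNegMulNormPow b p s) b := by
  have h : HasDerivAt (fun b : ℝ => -(b * ‖s‖ ^ p)) (-‖s‖ ^ p) b := by
    simpa using (hasDerivAt_id b).mul_const (-‖s‖ ^ p)
  refine h.exp.ofReal_comp.congr_deriv ?_
  simp only [expNegMulNormPow]
  push_cast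
  ring

section Moments

variable {E : Type*} [NormedAddCommGroup E] [MeasurableSpace E] {μ : Measure E} {g : E → ℂ}

def HasAllMoments (μ : Measure E) (g : E → ℂ) : Prop :=
  ∀ k : ℕ, Integrable (fun s => ‖s‖ ^ k • g s) μ

theorem HasAllMoments.integrable (hg : HasAllMoments μ g) : Integrable g μ := by
  simpa using hg 0

theorem HasAllMoments.mul [OpensMeasurableSpace E] (hg : HasAllMoments μ g) {p : E → ℂ}
    (hp : Continuous p) {C : ℝ} {j : ℕ} (hpC : ∀ s, ‖p s‖ ≤ C * ‖s‖ ^ j) :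
    HasAllMoments μ (fun s => p s * g s) := by
  intro k
  refine ((hg (k + j)).norm.const_mul C).mono' ?_ (ae_of_all _ fun s => ?_)
  · exact ((continuous_norm.pow k).aestronglyMeasurable).smul
      (hp.aestronglyMeasurable.mul hg.integrable.aestronglyMeasurable)
  · calc ‖‖s‖ ^ k • (p s * g s)‖ = ‖s‖ ^ k * ‖p s‖ * ‖g s‖ := by
          rw [norm_smul, norm_mul, norm_pow, norm_norm, mul_assoc]
      _ ≤ ‖s‖ ^ k * (C * ‖s‖ ^ j) * ‖g s‖ := by gcongr; exact hpC s
      _ = C * ‖‖s‖ ^ (k + j) • g s‖ := by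
          rw [norm_smul, norm_pow, norm_norm, pow_add]; ring

theorem hasAllMoments_expNegMulNormPow [NormedSpace ℝ E] [BorelSpace E] [FiniteDimensional ℝ E]
    [μ.IsAddHaarMeasure] {p : ℕ} (hp : 0 < p) {a : ℝ} (ha : 0 < a) :
    HasAllMoments μ (expNegMulNormPow a p) := by
  intro k
  rcases subsingleton_or_nontrivial E with _ | _
  · exact (integrable_const (‖(0 : E)‖ ^ k • expNegMulNormPow a p (0 : E))).congr
      (ae_of_all _ fun s => by rw [Subsingleton.elim s 0])
  -- in polar coordinates this is `∫₀^∞ y ^ (dim E - 1 + k) * exp (-a * y ^ p) dy`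
  rw [← integrable_norm_iff (by fun_prop)]
  simp only [expNegMulNormPow, norm_smul, norm_pow, Complex.norm_real, Real.norm_eq_abs,
    abs_norm, abs_exp]
  refine (integrable_fun_norm_addHaar μ (f := fun y => y ^ k * rexp (-(a * y ^ p)))).2 ?_
  have hradial := integrableOn_rpow_mul_exp_neg_mul_rpow
    (s := (Module.finrank ℝ E - 1 + k : ℕ)) (p := p) (b := a)
    (neg_one_lt_zero.trans_le (Nat.cast_nonneg _)) (by exact_mod_cast hp) ha
  refine hradial.congr_fun (fun y _ => ?_) measurableSet_Ioi
  simp only [Real.rpow_natCast, smul_eq_mul, pow_add, neg_mul]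
  ring

end Moments

section Oscillatory

variable {E : Type*} [NormedAddCommGroup E] [InnerProductSpace ℝ E]

theorem hasFDerivAt_cexp_I_inner (x s : E) :
    HasFDerivAt (fun y : E => cexp (I * ⟪y, s⟫_ℝ))
      (cexp (I * ⟪x, s⟫_ℝ) • I • (ofRealCLM ∘L innerSL ℝ s)) x := by
  have h : HasFDerivAt (fun y : E => (⟪y, s⟫_ℝ : ℂ)) (ofRealCLM ∘L innerSL ℝ s) x := by
    simp_rw [real_inner_comm s]
    exact ofRealCLM.hasFDerivAt.comp x (innerSL ℝ s).hasFDerivAt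
  exact (h.const_mul I).cexp

theorem norm_ofRealCLM_comp_innerSL_le (s : E) : ‖ofRealCLM ∘L innerSL ℝ s‖ ≤ ‖s‖ :=
  (ContinuousLinearMap.opNorm_comp_le _ _).trans
    (by rw [ofRealCLM_norm, innerSL_apply_norm, one_mul])

theorem norm_smul_cexp_I_inner_smul_le (c : ℂ) (y s : E) :
    ‖c • cexp (I * ⟪y, s⟫_ℝ) • I • (ofRealCLM ∘L innerSL ℝ s)‖ ≤ ‖‖s‖ • c‖ := by
  rw [norm_smul, norm_smul, norm_smul, norm_exp_I_mul_ofReal, norm_I, one_mul, one_mul,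
    norm_smul, norm_norm, mul_comm]
  gcongr
  exact norm_ofRealCLM_comp_innerSL_le s

variable [MeasurableSpace E] {μ : Measure E} {g : E → ℂ}

noncomputable def oscillatoryIntegral (μ : Measure E) (g : E → ℂ) (x : E) : ℂ :=
  ∫ s, cexp (I * ⟪x, s⟫_ℝ) * g s ∂μ

theorem oscillatoryIntegral_const_mul (c : ℂ) (x : E) :
    oscillatoryIntegral μ (fun s => c * g s) x = c * oscillatoryIntegral μ g x := by
  simp only [oscillatoryIntegral, ← integral_const_mul, mul_left_comm]

variable [OpensMeasurableSpace E]

theorem HasAllMoments.I_inner_mul (hg : HasAllMoments μ g) (v : E) :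
    HasAllMoments μ (fun s => I * ⟪v, s⟫_ℝ * g s) :=
  hg.mul (by fun_prop) (j := 1) fun s => by
    simpa using norm_inner_le_norm (𝕜 := ℝ) v s

theorem MeasureTheory.Integrable.cexp_I_inner_mul (hg : Integrable g μ) (x : E) :
    Integrable (fun s => cexp (I * ⟪x, s⟫_ℝ) * g s) μ :=
  hg.bdd_mul (c := 1) (by fun_prop) (ae_of_all _ fun s => (norm_exp_I_mul_ofReal _).le)

variable [SecondCountableTopology E]

theorem MeasureTheory.Integrable.smul_cexp_I_inner_smul (h0 : Integrable g μ)
    (h1 : Integrable (fun s => ‖s‖ • g s) μ) (x : E) :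
    Integrable (fun s => g s • cexp (I * ⟪x, s⟫_ℝ) • I • (ofRealCLM ∘L innerSL ℝ s)) μ := by
  have hL : Continuous fun s : E => cexp (I * ⟪x, s⟫_ℝ) • I • (ofRealCLM ∘L innerSL ℝ s) := by
    fun_prop
  exact h1.norm.mono' (h0.aestronglyMeasurable.smul hL.aestronglyMeasurable)
    (ae_of_all _ fun s => norm_smul_cexp_I_inner_smul_le (g s) x s)

theorem hasFDerivAt_oscillatoryIntegral (h0 : Integrable g μ)
    (h1 : Integrable (fun s => ‖s‖ • g s) μ) (x : E) :
    HasFDerivAt (oscillatoryIntegral μ g)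
      (∫ s, g s • cexp (I * ⟪x, s⟫_ℝ) • I • (ofRealCLM ∘L innerSL ℝ s) ∂μ) x :=
  hasFDerivAt_integral_of_dominated_of_fderiv_le Filter.univ_mem
    (Filter.Eventually.of_forall fun y => (h0.cexp_I_inner_mul y).aestronglyMeasurable)
    (h0.cexp_I_inner_mul x) (h0.smul_cexp_I_inner_smul h1 x).aestronglyMeasurable
    (ae_of_all _ fun s y _ => norm_smul_cexp_I_inner_smul_le (g s) y s) h1.norm
    (ae_of_all _ fun s y _ => (hasFDerivAt_cexp_I_inner y s).mul_const (g s))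

theorem fderiv_oscillatoryIntegral_apply (h0 : Integrable g μ)
    (h1 : Integrable (fun s => ‖s‖ • g s) μ) (x v : E) :
    fderiv ℝ (oscillatoryIntegral μ g) x v =
      oscillatoryIntegral μ (fun s => I * ⟪v, s⟫_ℝ * g s) x := by
  rw [(hasFDerivAt_oscillatoryIntegral h0 h1 x).fderiv,
    ContinuousLinearMap.integral_apply (h0.smul_cexp_I_inner_smul h1 x)]
  refine integral_congr_ae (ae_of_all _ fun s => ?_)
  simp only [smul_apply, ContinuousLinearMap.comp_apply, innerSL_apply_apply,
    ofRealCLM_apply, smul_eq_mul, real_inner_comm v]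
  ring

end Oscillatory

section Laplacian

variable {n : ℕ} {μ : Measure (EuclideanSpace ℝ (Fin n))} {g : EuclideanSpace ℝ (Fin n) → ℂ}

theorem EuclideanSpace.sum_I_mul_I_mul_eq_neg_norm_sq_mul (s : EuclideanSpace ℝ (Fin n)) (c : ℂ) :
    ∑ i, I * (s i : ℂ) * (I * s i * c) = -(‖s‖ : ℂ) ^ 2 * c := by
  have hnorm : (‖s‖ : ℂ) ^ 2 = ∑ i, (s i : ℂ) ^ 2 := by
    exact_mod_cast EuclideanSpace.real_norm_sq_eq s
  rw [hnorm, ← Finset.sum_neg_distrib, Finset.sum_mul]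
  exact Finset.sum_congr rfl fun i _ => by linear_combination ((s i : ℂ) ^ 2 * c) * I_sq

theorem euclLaplacian_oscillatoryIntegral (hg : HasAllMoments μ g) :
    euclLaplacian (oscillatoryIntegral μ g) =
      oscillatoryIntegral μ (fun s => -(‖s‖ : ℂ) ^ 2 * g s) := by
  have hfd : ∀ {h}, HasAllMoments μ h → ∀ y v, fderiv ℝ (oscillatoryIntegral μ h) y v =
      oscillatoryIntegral μ (fun s => I * ⟪v, s⟫_ℝ * h s) y := fun hh y v =>
    fderiv_oscillatoryIntegral_apply hh.integrable (by simpa using hh 1) y v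
  funext x
  simp only [euclLaplacian, hfd hg]
  simp only [hfd (hg.I_inner_mul _)]
  simp only [oscillatoryIntegral]
  rw [← integral_finsetSum _ fun i _ =>
    ((hg.I_inner_mul _).I_inner_mul _).integrable.cexp_I_inner_mul x]
  refine integral_congr_ae (ae_of_all _ fun s => ?_)
  simp only [← Finset.mul_sum, EuclideanSpace.inner_single_left, map_one, one_mul,
    EuclideanSpace.sum_I_mul_I_mul_eq_neg_norm_sq_mul]

theorem euclLaplacian_iterate_oscillatoryIntegral (hg : HasAllMoments μ g) (k : ℕ) :
    euclLaplacian^[k] (oscillatoryIntegral μ g) =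
      oscillatoryIntegral μ (fun s => (-(‖s‖ : ℂ) ^ 2) ^ k * g s) := by
  induction k with
  | zero => simp
  | succ k ih =>
    have hgk : HasAllMoments μ (fun s => (-(‖s‖ : ℂ) ^ 2) ^ k * g s) :=
      hg.mul (by fun_prop) (C := 1) (j := 2 * k) fun s => by simp [pow_mul]
    rw [Function.iterate_succ_apply', ih, euclLaplacian_oscillatoryIntegral hgk]
    congr 1
    funext s
    ring

end Laplacian

section TimeDerivative

variable {E : Type*} [NormedAddCommGroup E] [InnerProductSpace ℝ E] [MeasurableSpace E]
  [BorelSpace E] [FiniteDimensional ℝ E] {μ : Measure E} [μ.IsAddHaarMeasure] {p : ℕ}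

theorem hasDerivAt_oscillatoryIntegral_expNegMulNormPow (hp : 0 < p) {a : ℝ} (ha : 0 < a) (x : E) :
    HasDerivAt (fun b => oscillatoryIntegral μ (expNegMulNormPow b p) x)
      (oscillatoryIntegral μ (fun s => -(‖s‖ : ℂ) ^ p * expNegMulNormPow a p s) x) a := by
  have hbound : ∀ s, ∀ b ∈ Metric.ball a (a / 2),
      ‖cexp (I * ⟪x, s⟫_ℝ) * (-(‖s‖ : ℂ) ^ p * expNegMulNormPow b p s)‖ ≤
        ‖‖s‖ ^ p • expNegMulNormPow (a / 2) p s‖ := fun s b hb => by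
    have hab : a / 2 ≤ b := by
      rw [Metric.mem_ball, Real.dist_eq, abs_lt] at hb; linarith
    simp only [expNegMulNormPow, norm_mul, norm_smul, norm_exp_I_mul_ofReal, norm_neg, norm_pow,
      Complex.norm_real, Real.norm_eq_abs, abs_exp, one_mul]
    gcongr
  exact (hasDerivAt_integral_of_dominated_loc_of_deriv_le (Metric.ball_mem_nhds a (half_pos ha))
    (Filter.Eventually.of_forall fun b => (by fun_prop : Continuous _).aestronglyMeasurable)
    ((hasAllMoments_expNegMulNormPow hp ha).integrable.cexp_I_inner_mul x)
    (by fun_prop : Continuous _).aestronglyMeasurable (ae_of_all _ hbound)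
    (hasAllMoments_expNegMulNormPow hp (half_pos ha) p).norm
    (ae_of_all _ fun s b _ => (hasDerivAt_expNegMulNormPow b s).const_mul _)).2

end TimeDerivative

theorem heatKernel_eq_oscillatoryIntegral (n m : ℕ) (a : ℝ) :
    heatKernel n m a = oscillatoryIntegral volume
      (fun s => ((((2 * π) ^ n)⁻¹ : ℝ) : ℂ) * expNegMulNormPow a (2 * m) s) := by
  funext x
  rw [heatKernel, ← integral_smul]
  refine integral_congr_ae (ae_of_all _ fun s => ?_)
  simp only [expNegMulNormPow, Complex.real_smul, sub_eq_add_neg, Complex.exp_add]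
  push_cast
  ring

theorem heatKernel_solves_heat_general (n m : ℕ) (hm : 1 ≤ m) :
    ∀ a : ℝ, 0 < a → ∀ x : EuclideanSpace ℝ (Fin n),
      HasDerivAt (fun b : ℝ => heatKernel n m b x)
        (-((-1 : ℂ) ^ m * (euclLaplacian^[m] (heatKernel n m a)) x)) a := by
  intro a ha x
  have hp : 0 < 2 * m := by omega
  set c : ℂ := ((((2 * π) ^ n)⁻¹ : ℝ) : ℂ)
  have hw : HasAllMoments volume
      (fun s : EuclideanSpace ℝ (Fin n) => c * expNegMulNormPow a (2 * m) s) :=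
    (hasAllMoments_expNegMulNormPow hp ha).mul continuous_const (C := ‖c‖) (j := 0)
      fun _ => by simp
  have hdt := (hasDerivAt_oscillatoryIntegral_expNegMulNormPow (μ := volume) hp ha x).const_mul c
  simp only [← oscillatoryIntegral_const_mul] at hdt
  simp only [heatKernel_eq_oscillatoryIntegral]
  rw [euclLaplacian_iterate_oscillatoryIntegral hw, ← neg_mul, ← oscillatoryIntegral_const_mul]
  refine hdt.congr_deriv (congrArg (oscillatoryIntegral volume · x) (funext fun s => ?_))
  have hsign : (-1 : ℂ) ^ m * (-(‖s‖ : ℂ) ^ 2) ^ m = (‖s‖ : ℂ) ^ (2 * m) := by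
    rw [← mul_pow, neg_one_mul, neg_neg, ← pow_mul]
  linear_combination (c * expNegMulNormPow a (2 * m) s) * hsign

theorem heatKernel_solves_heat (n m : ℕ) (hn : 1 ≤ n) (hm : 1 ≤ m) :
    ∀ a : ℝ, 0 < a → ∀ x : EuclideanSpace ℝ (Fin n),
      HasDerivAt (fun b : ℝ => heatKernel n m b x)
        (-((-1 : ℂ) ^ m * (euclLaplacian^[m] (heatKernel n m a)) x)) a :=
  heatKernel_solves_heat_general n m hm
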